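/- arXiv:1102.1093 — 2 statements merged into one kernel-verified Lean document; each statement's English description precedes it below -/
import Mathlib

section
/- Let C ⊂ P^2 be a rational curve of degree d ≥ 2 with splitting type (a,b), a ≤ b, given by a parameterization φ = (φ_0, φ_1, φ_2). If σ(φ) is the saturation degree of the ideal (φ_0, φ_1, φ_2) ⊂ K[s,t], then b + d − 1 = σ(φ) ≤ 2d − 2. -/
/- A rational plane curve is given parametrically by three homogeneous forms
φ_0, φ_1, φ_2 ∈ K[s,t]_d.  By Grothendieck splitting, φ*Ω_{P²}(1) ≅ O(−a)⊕O(−b);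
pulling back the Euler sequence identifies the graded module ⊕_k H⁰(φ*Ω(1)(k+d))
with the module of syzygies of (φ_0,φ_1,φ_2).  Thus "(a,b) is the splitting type"
is faithfully encoded by: for every k, the space of degree-k syzygies has
dimension max(0,k+1−a) + max(0,k+1−b), which says precisely that the syzygy
module is S(−a) ⊕ S(−b). -/

noncomputable section

open MvPolynomial

variable (K : Type) [Field K]

/-- The linear map `(α₀,α₁,α₂) ↦ α₀φ₀ + α₁φ₁ + α₂φ₂`. -/
def sigmaMap (φ : Fin 3 → MvPolynomial (Fin 2) K) :
    (Fin 3 → MvPolynomial (Fin 2) K) →ₗ[K] MvPolynomial (Fin 2) K :=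
  ∑ i : Fin 3, (LinearMap.mulRight K (φ i)).comp (LinearMap.proj i)

/-- The space of syzygies of `φ` in degree `k`: triples of homogeneous forms of
degree `k` with `α₀φ₀ + α₁φ₁ + α₂φ₂ = 0`. -/
def syz (φ : Fin 3 → MvPolynomial (Fin 2) K) (k : ℕ) :
    Submodule K (Fin 3 → MvPolynomial (Fin 2) K) :=
  (⨅ i : Fin 3, (homogeneousSubmodule (Fin 2) K k).comap (LinearMap.proj i)) ⊓
    LinearMap.ker (sigmaMap K φ)

/-- `(a,b)` is the splitting type of the curve parameterized by `φ`, i.e.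
`φ*Ω_{P²}(1) ≅ O(−a) ⊕ O(−b)`: the graded syzygy module of `φ` is
`S(−a) ⊕ S(−b)`, recorded dimensionwise. -/
def IsSplittingType (φ : Fin 3 → MvPolynomial (Fin 2) K) (a b : ℕ) : Prop :=
  ∀ k : ℕ, (Module.finrank K (syz K φ k) : ℤ) =
    max 0 ((k : ℤ) + 1 - a) + max 0 ((k : ℤ) + 1 - b)

/-- `φ` is a parameterization of a degree-`d` plane curve: the `φ_i` are forms of
degree `d` and the kernel of `K[x₀,x₁,x₂] → K[s,t]` is generated by an
irreducible form of degree `d` (the implicit equation; its degree being `d`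
encodes that `φ` is generically injective onto its image). -/
def ParamOfDegree (d : ℕ) (φ : Fin 3 → MvPolynomial (Fin 2) K) : Prop :=
  (∀ i, (φ i).IsHomogeneous d) ∧
  ∃ F : MvPolynomial (Fin 3) K, F.IsHomogeneous d ∧ Irreducible F ∧
    RingHom.ker (MvPolynomial.aeval φ : MvPolynomial (Fin 3) K →ₐ[K] _).toRingHom =
      Ideal.span {F}

/-! In degree `m + d` the ideal `J = (φ₀, φ₁, φ₂)` is the image of the multiplication map
`S_m³ → S_{m+d}`, whose kernel is the space of degree-`m` syzygies. As `dim S_n = n + 1`,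
`J_{m+d} = S_{m+d}` exactly when the syzygies of degree `m` have dimension `2m + 2 - d`. For the
splitting type `(a, b)` this holds at `m = b - 1`, where that dimension is `b - a`, and fails at
`m = b - 2`, where it is `max(0, b - 1 - a) > b - 2 - a` (for `b = 1`, simply `J_{d-1} = 0`).
Since `J_i = S_i` propagates to all higher degrees, `σ = b + d - 1`. The bound `σ ≤ 2d - 2` is
`a ≥ 1`: a constant syzygy would be a linear form vanishing on the curve, while its implicit
equation has degree `d ≥ 2`. -/

namespace MvPolynomial

variable {σ R : Type*} [CommSemiring R]

section
attribute [local instance] MvPolynomial.gradedAlgebra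

theorem homogeneousComponent_mul_of_isHomogeneous_right {p q : MvPolynomial σ R} {d : ℕ}
    (hq : q.IsHomogeneous d) (n : ℕ) :
    homogeneousComponent n (p * q) = if d ≤ n then homogeneousComponent (n - d) p * q else 0 := by
  simp only [← decomposition.decompose'_apply]
  exact DirectSum.coe_decompose_mul_of_right_mem (homogeneousSubmodule σ R) n hq

end

theorem IsHomogeneous.eq_zero_of_mem_span {s : Set (MvPolynomial σ R)} {d n : ℕ}
    (hs : ∀ q ∈ s, q.IsHomogeneous d) (hnd : n < d) {p : MvPolynomial σ R}
    (hp : p.IsHomogeneous n) (hps : p ∈ Ideal.span s) : p = 0 := by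
  obtain ⟨k, c, g, rfl⟩ := Submodule.mem_span_set'.mp hps
  rw [← homogeneousComponent_eq_self hp, map_sum]
  refine Finset.sum_eq_zero fun i _ => ?_
  rw [smul_eq_mul, homogeneousComponent_mul_of_isHomogeneous_right (hs _ (g i).2),
    if_neg (by omega)]

instance [Finite σ] (n : ℕ) : Module.Finite R (homogeneousSubmodule σ R n) :=
  Module.Finite.iff_fg.mpr (homogeneousSubmodule_fg σ R n)

theorem finrank_homogeneousSubmodule (k : Type*) [Field k] [Fintype σ] (n : ℕ) :
    Module.finrank k (homogeneousSubmodule σ k n) = (Fintype.card σ + n - 1).choose n := by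
  classical
  have hs : {v : σ →₀ ℕ | v.degree = n} = ↑((Finset.univ : Finset σ).finsuppAntidiag n) := by
    ext v
    simp [Finset.mem_finsuppAntidiag, Finsupp.degree_eq_sum]
  rw [homogeneousSubmodule_eq_finsupp_supported, hs,
    (AddMonoidAlgebra.supportedEquivFinsupp _).finrank_eq, Module.finrank_finsupp_self]
  simp [Finset.card_finsuppAntidiag_nat_eq_choose]

theorem finrank_homogeneousSubmodule_fin_two (k : Type*) [Field k] (n : ℕ) :
    Module.finrank k (homogeneousSubmodule (Fin 2) k n) = n + 1 := by
  rw [finrank_homogeneousSubmodule, Fintype.card_fin, show 2 + n - 1 = n + 1 by omega,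
    Nat.choose_succ_self_right]

/-- `ContainsForms I n` is the paper's `I_n = S_n`. -/
def ContainsForms (I : Ideal (MvPolynomial σ R)) (n : ℕ) : Prop :=
  ∀ f : MvPolynomial σ R, f.IsHomogeneous n → f ∈ I

theorem ContainsForms.succ {I : Ideal (MvPolynomial σ R)} {n : ℕ} (h : ContainsForms I n) :
    ContainsForms I (n + 1) := by
  intro f hf
  rw [f.as_sum]
  refine Ideal.sum_mem _ fun v hv => ?_
  have hv : v.degree = n + 1 := by
    rw [Finsupp.degree_eq_weight_one]; exact hf (mem_support_iff.mp hv)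
  have hv0 : v ≠ 0 := by rintro rfl; simp at hv
  obtain ⟨j, hj⟩ := Finsupp.ne_iff.mp hv0
  have hsplit : v = Finsupp.single j 1 + (v - Finsupp.single j 1) :=
    (add_tsub_cancel_of_le (Finsupp.single_le_iff.mpr (Nat.one_le_iff_ne_zero.mpr hj))).symm
  rw [hsplit, monomial_single_add, pow_one]
  refine Ideal.mul_mem_left _ _ (h _ (isHomogeneous_monomial _ ?_))
  have := congrArg Finsupp.degree hsplit
  rw [map_add, Finsupp.degree_single] at this
  omega

theorem ContainsForms.mono {I : Ideal (MvPolynomial σ R)} {m n : ℕ} (h : ContainsForms I m)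
    (hmn : m ≤ n) : ContainsForms I n := by
  induction n, hmn using Nat.le_induction with
  | base => exact h
  | succ n _ ih => exact ih.succ

theorem not_containsForms_of_lt [Nonempty σ] [Nontrivial R] {s : Set (MvPolynomial σ R)}
    {d n : ℕ} (hs : ∀ q ∈ s, q.IsHomogeneous d) (hnd : n < d) :
    ¬ ContainsForms (Ideal.span s) n := by
  intro h
  obtain ⟨j⟩ := ‹Nonempty σ›
  have hX := isHomogeneous_X_pow (R := R) j n
  have hX0 := hX.eq_zero_of_mem_span hs hnd (h _ hX)
  rw [X_pow_eq_monomial, monomial_eq_zero] at hX0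
  exact one_ne_zero hX0

end MvPolynomial

section FormsMulMap

variable {σ ι R : Type*} [CommSemiring R] [Fintype ι] {φ : ι → MvPolynomial σ R} {d : ℕ}

def formsMulMap (hφ : ∀ i, (φ i).IsHomogeneous d) (m : ℕ) :
    (ι → homogeneousSubmodule σ R m) →ₗ[R] homogeneousSubmodule σ R (m + d) where
  toFun c := ⟨∑ i, (c i : MvPolynomial σ R) * φ i,
    Submodule.sum_mem _ fun i _ => (c i).2.mul (hφ i)⟩
  map_add' x y := Subtype.ext (by simp [add_mul, Finset.sum_add_distrib])
  map_smul' r x := Subtype.ext (by simp [Finset.smul_sum])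

theorem formsMulMap_apply_coe (hφ : ∀ i, (φ i).IsHomogeneous d) {m : ℕ}
    (c : ι → homogeneousSubmodule σ R m) :
    (formsMulMap hφ m c : MvPolynomial σ R) = ∑ i, (c i : MvPolynomial σ R) * φ i :=
  rfl

theorem mem_range_formsMulMap_iff (hφ : ∀ i, (φ i).IsHomogeneous d) (m : ℕ)
    (f : homogeneousSubmodule σ R (m + d)) :
    f ∈ LinearMap.range (formsMulMap hφ m) ↔
      (f : MvPolynomial σ R) ∈ Ideal.span (Set.range φ) := by
  refine ⟨?_, fun hf => ?_⟩
  · rintro ⟨c, rfl⟩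
    exact Ideal.sum_mem _ fun i _ => Ideal.mul_mem_left _ _ (Ideal.subset_span ⟨i, rfl⟩)
  · obtain ⟨c, hc⟩ := Ideal.mem_span_range_iff_exists_fun.mp hf
    refine ⟨fun i => ⟨homogeneousComponent m (c i), homogeneousComponent_mem m (c i)⟩,
      Subtype.ext ?_⟩
    have hcomp : ∀ i, homogeneousComponent (m + d) (c i * φ i) =
        homogeneousComponent m (c i) * φ i := fun i => by
      rw [homogeneousComponent_mul_of_isHomogeneous_right (hφ i), if_pos (by omega),
        Nat.add_sub_cancel]
    rw [formsMulMap_apply_coe, ← homogeneousComponent_eq_self f.2, ← hc, map_sum]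
    simp only [hcomp]

theorem containsForms_add_iff_range_eq_top (hφ : ∀ i, (φ i).IsHomogeneous d) (m : ℕ) :
    ContainsForms (Ideal.span (Set.range φ)) (m + d) ↔
      LinearMap.range (formsMulMap hφ m) = ⊤ := by
  simp only [Submodule.eq_top_iff', mem_range_formsMulMap_iff, Subtype.forall]
  rfl

end FormsMulMap

section Syzygies

variable {K} {φ : Fin 3 → MvPolynomial (Fin 2) K} {d : ℕ}

theorem sigmaMap_apply (α : Fin 3 → MvPolynomial (Fin 2) K) :
    sigmaMap K φ α = ∑ i, α i * φ i := by
  simp [sigmaMap]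

theorem mem_syz_iff {m : ℕ} {α : Fin 3 → MvPolynomial (Fin 2) K} :
    α ∈ syz K φ m ↔ (∀ i, (α i).IsHomogeneous m) ∧ ∑ i, α i * φ i = 0 := by
  simp only [syz, Submodule.mem_inf, Submodule.mem_iInf, Submodule.mem_comap, LinearMap.mem_ker,
    sigmaMap_apply, LinearMap.proj_apply, mem_homogeneousSubmodule]

theorem syz_eq_map_ker (hφ : ∀ i, (φ i).IsHomogeneous d) (m : ℕ) :
    syz K φ m = (LinearMap.ker (formsMulMap hφ m)).map
      (LinearMap.piMap fun _ => (homogeneousSubmodule (Fin 2) K m).subtype) := by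
  ext α
  simp only [mem_syz_iff, Submodule.mem_map, LinearMap.mem_ker]
  constructor
  · rintro ⟨hα, h0⟩
    refine ⟨fun i => ⟨α i, hα i⟩, Subtype.ext ?_, rfl⟩
    simpa [formsMulMap_apply_coe] using h0
  · rintro ⟨c, hc, rfl⟩
    refine ⟨fun i => (c i).2, ?_⟩
    simpa [formsMulMap_apply_coe] using congrArg Subtype.val hc

theorem finrank_syz_add_finrank_range (hφ : ∀ i, (φ i).IsHomogeneous d) (m : ℕ) :
    Module.finrank K (syz K φ m) + Module.finrank K (LinearMap.range (formsMulMap hφ m)) =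
      3 * (m + 1) := by
  have hinj : Function.Injective
      (LinearMap.piMap fun (_ : Fin 3) => (homogeneousSubmodule (Fin 2) K m).subtype) :=
    Pi.map_injective.mpr fun _ => Subtype.val_injective
  rw [syz_eq_map_ker hφ, ← (Submodule.equivMapOfInjective _ hinj _).finrank_eq, add_comm,
    LinearMap.finrank_range_add_finrank_ker, Module.finrank_pi_fintype]
  simp [finrank_homogeneousSubmodule_fin_two, mul_comm]

theorem containsForms_add_iff_finrank_syz (hφ : ∀ i, (φ i).IsHomogeneous d) (m : ℕ) :
    ContainsForms (Ideal.span (Set.range φ)) (m + d) ↔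
      Module.finrank K (syz K φ m) + (m + d + 1) = 3 * (m + 1) := by
  rw [containsForms_add_iff_range_eq_top hφ, Submodule.eq_top_iff_finrank_eq,
    finrank_homogeneousSubmodule_fin_two]
  have := finrank_syz_add_finrank_range hφ m
  omega

end Syzygies

section Parametrization

variable {K} {φ : Fin 3 → MvPolynomial (Fin 2) K} {d : ℕ}

theorem ParamOfDegree.eq_zero_of_aeval_eq_zero (hφ : ParamOfDegree K d φ)
    {p : MvPolynomial (Fin 3) K} {n : ℕ} (hp : p.IsHomogeneous n) (hnd : n < d)
    (h : aeval φ p = 0) : p = 0 := by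
  obtain ⟨-, F, hF, -, hker⟩ := hφ
  refine hp.eq_zero_of_mem_span (s := {F}) (by simpa using hF) hnd ?_
  rw [← hker]
  exact RingHom.mem_ker.mpr h

theorem ParamOfDegree.syz_zero_eq_bot (hφ : ParamOfDegree K d φ) (hd : 2 ≤ d) :
    syz K φ 0 = ⊥ := by
  refine (Submodule.eq_bot_iff _).mpr fun α hα => ?_
  obtain ⟨hhom, hrel⟩ := mem_syz_iff.mp hα
  have hconst : ∀ i, α i = C (coeff 0 (α i)) := fun i => by
    rw [← homogeneousComponent_zero, homogeneousComponent_eq_self (hhom i)]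
  let ℓ : MvPolynomial (Fin 3) K := ∑ i : Fin 3, C (coeff 0 (α i)) * X i
  have hℓ : ℓ.IsHomogeneous 1 :=
    IsHomogeneous.sum _ _ _ fun i _ => isHomogeneous_C_mul_X _ i
  have hℓ0 : ℓ = 0 := hφ.eq_zero_of_aeval_eq_zero hℓ (by omega) <| by
    rw [← hrel, map_sum]
    refine Finset.sum_congr rfl fun i _ => ?_
    rw [map_mul, aeval_C, aeval_X, algebraMap_eq, ← hconst i]
  have hcoeff : ∀ i, eval (Pi.single i 1) ℓ = coeff 0 (α i) := fun i => by
    simp [ℓ, Pi.single_apply]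
  funext i
  rw [Pi.zero_apply, hconst i, ← hcoeff, hℓ0, map_zero, map_zero]

end Parametrization

theorem saturation_degree_eq (d : ℕ) (hd : 2 ≤ d)
    (φ : Fin 3 → MvPolynomial (Fin 2) K) (hφ : ParamOfDegree K d φ)
    (a b : ℕ) (hab : a ≤ b) (hsum : a + b = d)
    (hsplit : IsSplittingType K φ a b)
    (σ : ℕ)
    (hσ : IsLeast {i : ℕ | ∀ f : MvPolynomial (Fin 2) K, f.IsHomogeneous i →
      f ∈ Ideal.span (Set.range φ)} σ) :
    b + d - 1 = σ ∧ σ ≤ 2 * d - 2 := by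
  have hφd := hφ.1
  have ha : 1 ≤ a := by
    have := hsplit 0
    rw [hφ.syz_zero_eq_bot hd, finrank_bot] at this
    omega
  have hmax : ContainsForms (Ideal.span (Set.range φ)) (b - 1 + d) := by
    rw [containsForms_add_iff_finrank_syz hφd]
    have := hsplit (b - 1)
    omega
  have hbelow : ¬ ContainsForms (Ideal.span (Set.range φ)) (b + d - 2) := by
    rcases Nat.lt_or_ge b 2 with hb | hb
    · exact not_containsForms_of_lt (by rintro _ ⟨i, rfl⟩; exact hφd i) (by omega)
    · rw [show b + d - 2 = b - 2 + d by omega, containsForms_add_iff_finrank_syz hφd]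
      have := hsplit (b - 2)
      omega
  have hσle := hσ.2 hmax
  have hσgt : b + d - 2 < σ := lt_of_not_ge fun h => hbelow (ContainsForms.mono hσ.1 h)
  omega
end
end

section
/- Let X be the blow up of P^2 at 9 points. Every class E ∈ Cl(X) with E·L ≥ 0, E^2 = E·K_X = −1, and E·L ≤ 2·max_i(E·E_i) + 1 (the Ascenzi condition) satisfies E·L ≤ 26. -/
/-!
Write `d = E·L` and `m_i = E·E_i`. The conditions `E·K_X = -1` and `E² = -1` say
`∑ m_i = 3d - 1` and `∑ m_i² = d² + 1`. Removing the largest multiplicity `M` and applying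
Cauchy–Schwarz to the remaining eight gives `(3d - 1 - M)² ≤ 8 (d² + 1 - M²)`. The left side
minus the right side is a convex quadratic in `M` that increases on `M ≥ (d - 1)/2` once `d ≥ 3`,
so the Ascenzi condition lets one replace `M` by `(d - 1)/2`, leaving `d² - 26d - 23 ≤ 0`, which fails for `d ≥ 27`.
-/

/- Cl(X) of the blow up of P^2 at 9 points, as Z^10: coordinate 0 is the
L-coefficient, coordinate i.succ the E_{i+1}-coefficient. -/

def inter9 (x y : Fin 10 → ℤ) : ℤ := x 0 * y 0 - ∑ i : Fin 9, x i.succ * y i.succ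

def K9 : Fin 10 → ℤ := fun j => if j = 0 then -3 else 1

def L9 : Fin 10 → ℤ := fun j => if j = 0 then 1 else 0

def Ei9 (i : Fin 9) : Fin 10 → ℤ := fun j => if j = i.succ then 1 else 0

/-- `max_i (E·E_i)`. -/
def maxm (E : Fin 10 → ℤ) : ℤ :=
  Finset.univ.sup' Finset.univ_nonempty (fun i : Fin 9 => inter9 E (Ei9 i))

open Finset

theorem sq_sum_sub_le_card_sub_one_mul {ι α : Type*} [Fintype ι] [CommRing α] [LinearOrder α]
    [IsStrictOrderedRing α] (f : ι → α) (i : ι) :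
    (∑ j, f j - f i) ^ 2 ≤ (Fintype.card ι - 1) * (∑ j, f j ^ 2 - f i ^ 2) := by
  classical
  have hi : i ∈ univ := mem_univ i
  have hcs := sq_sum_le_card_mul_sum_sq (s := univ.erase i) (f := f)
  rwa [sum_erase_eq_sub hi, sum_erase_eq_sub hi, card_erase_of_mem hi, card_univ,
    Nat.cast_sub (Fintype.card_pos_iff.2 ⟨i⟩), Nat.cast_one] at hcs

lemma inter9_L9 (E : Fin 10 → ℤ) : inter9 E L9 = E 0 := by
  simp [inter9, L9, Fin.succ_ne_zero]

lemma inter9_Ei9 (E : Fin 10 → ℤ) (i : Fin 9) : inter9 E (Ei9 i) = -E i.succ := by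
  simp [inter9, Ei9, Fin.succ_inj, (Fin.succ_ne_zero i).symm]

lemma inter9_K9 (E : Fin 10 → ℤ) :
    inter9 E K9 = -3 * inter9 E L9 + ∑ i, inter9 E (Ei9 i) := by
  simp only [inter9_L9, inter9_Ei9, sum_neg_distrib]
  simp [inter9, K9, Fin.succ_ne_zero]
  ring

lemma inter9_self (E : Fin 10 → ℤ) :
    inter9 E E = inter9 E L9 ^ 2 - ∑ i, inter9 E (Ei9 i) ^ 2 := by
  simp only [inter9_L9, inter9_Ei9, neg_sq]
  simp [inter9, sq]

lemma exists_inter9_Ei9_eq_maxm (E : Fin 10 → ℤ) : ∃ i, inter9 E (Ei9 i) = maxm E := by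
  obtain ⟨i, -, hi⟩ := exists_mem_eq_sup' univ_nonempty fun i : Fin 9 => inter9 E (Ei9 i)
  exact ⟨i, hi.symm⟩

lemma le_26_of_sq_le_of_le_two_mul_add_one {d M : ℤ}
    (hcs : (3 * d - 1 - M) ^ 2 ≤ 8 * (d ^ 2 + 1 - M ^ 2)) (hasc : d ≤ 2 * M + 1) : d ≤ 26 := by
  by_contra! hd
  -- `4 ((3d - 1 - M)² - 8 (d² + 1 - M²)) = (d² - 26d - 23) + (2M - d + 1) (18M - 3d - 5)`
  have hshift : 0 ≤ (2 * M - d + 1) * (18 * M - 3 * d - 5) := by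
    apply mul_nonneg <;> linarith
  nlinarith

theorem ascenzi_degree_bound_general (E : Fin 10 → ℤ)
    (hself : inter9 E E = -1) (hK : inter9 E K9 = -1)
    (hasc : inter9 E L9 ≤ 2 * maxm E + 1) :
    inter9 E L9 ≤ 26 := by
  obtain ⟨i, hi⟩ := exists_inter9_Ei9_eq_maxm E
  have hsum : ∑ j, inter9 E (Ei9 j) = 3 * inter9 E L9 - 1 := by linarith [inter9_K9 E]
  have hsq : ∑ j, inter9 E (Ei9 j) ^ 2 = inter9 E L9 ^ 2 + 1 := by linarith [inter9_self E]
  have hcs := sq_sum_sub_le_card_sub_one_mul (fun j => inter9 E (Ei9 j)) i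
  simp only [hi, hsum, hsq, Fintype.card_fin] at hcs
  norm_num at hcs
  exact le_26_of_sq_le_of_le_two_mul_add_one hcs hasc

/-- every class `E` with `E·L ≥ 0`, `E² = E·K_X = −1` and
`E·L ≤ 2·max_i(E·E_i) + 1` (the Ascenzi condition) satisfies `E·L ≤ 26`. -/
theorem ascenzi_degree_bound (E : Fin 10 → ℤ)
    (hd : 0 ≤ inter9 E L9) (hself : inter9 E E = -1) (hK : inter9 E K9 = -1)
    (hasc : inter9 E L9 ≤ 2 * maxm E + 1) :
    inter9 E L9 ≤ 26 :=
  ascenzi_degree_bound_general E hself hK hasc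
end
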